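/- arXiv:2011.07913 — 2 statements merged into one kernel-verified Lean document; each statement's English description precedes it below -/
import Mathlib

section
/- Let (N,c,E,P) be a bankruptcy problem with a priori unions, with partition P = {P_1,…,P_m}, and let v be the associated bankruptcy game, v(S) = max{0, E − Σ_{j∈N∖S} c_j}. For i ∈ N let P_(i) denote the block of P containing i and p_i = |P_(i)|. Then the Owen value of the bankruptcy game equals the RA-random arrival rule with unions: for every i ∈ N, Σ_{R ⊆ P∖{P_(i)}} Σ_{S ⊆ P_(i)∖{i}} [ |S|!·(p_i−|S|−1)!·|R|!·(m−|R|−1)! / (p_i!·m!) ] · ( v(∪_{P_l∈R} P_l ∪ S ∪ {i}) − v(∪_{P_l∈R} P_l ∪ S) ) = (1/|Π_P(N)|) Σ_{σ∈Π_P(N)} min{ c_i, max{0, E − Σ_{j∈P_i^σ} c_j} }. -/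
open Finset
open scoped Classical

/-- The set of predecessors of `i` under the permutation `σ`. -/
def preds {N : Type} [Fintype N] (σ : N ≃ Fin (Fintype.card N)) (i : N) : Finset N :=
  Finset.univ.filter (fun j => σ j < σ i)

/-- The marginal payment `x(σ)_i = min (c i) (max 0 (E - ∑_{j ∈ P_i^σ} c j))`. -/
noncomputable def payment {N : Type} [Fintype N] (c : N → ℝ) (E : ℝ)
    (σ : N ≃ Fin (Fintype.card N)) (i : N) : ℝ :=
  min (c i) (max 0 (E - ∑ j ∈ preds σ i, c j))

/-- A permutation `σ` of `N` is compatible with the partition `P` if whenever `i` and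
`j` lie in the same block and `σ i < σ k < σ j`, then `k` lies in that same block. -/
def Compatible {N : Type} [Fintype N] [DecidableEq N]
    (P : Finpartition (Finset.univ : Finset N)) (σ : N ≃ Fin (Fintype.card N)) : Prop :=
  ∀ i j k : N, (∃ B ∈ P.parts, i ∈ B ∧ j ∈ B) → σ i < σ k → σ k < σ j →
    ∃ B ∈ P.parts, i ∈ B ∧ j ∈ B ∧ k ∈ B

/-- `Π_P(N)`: the finite set of permutations of `N` compatible with `P`. -/
noncomputable def compatPerms {N : Type} [Fintype N] [DecidableEq N]
    (P : Finpartition (Finset.univ : Finset N)) : Finset (N ≃ Fin (Fintype.card N)) :=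
  Finset.univ.filter (fun σ => Compatible P σ)

/-- The RA-random arrival rule with a priori unions:
`RA^P_i = (1/|Π_P(N)|) ∑_{σ ∈ Π_P(N)} x(σ)_i`. -/
noncomputable def RAU {N : Type} [Fintype N] [DecidableEq N]
    (c : N → ℝ) (E : ℝ) (P : Finpartition (Finset.univ : Finset N)) (i : N) : ℝ :=
  (1 / ((compatPerms P).card : ℝ)) * ∑ σ ∈ compatPerms P, payment c E σ i


/-!
A permutation compatible with `P` is the same as an ordering of the blocks together with an
ordering inside each block: it lists the blocks one after another. Hence the predecessors of
`i ∈ B` are the union of a set `R` of blocks preceding `B` and a set `S ⊆ B ∖ {i}`, and the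
compatible permutations producing a given pair `(R, S)` number
`|R|! (m - |R| - 1)! · |S|! (p_i - |S| - 1)! · ∏_{C ≠ B} |C|!`, out of `m! ∏_C |C|!` in all.
So the Owen formula is the average over `Π_P(N)` of the marginal contribution
`v (P_i^σ ∪ {i}) - v (P_i^σ)`. In a bankruptcy game this contribution equals
`min (c i) (max 0 (E - ∑_{j succeeding i} c j))`, and reversing `σ`, which preserves
compatibility, turns successors into predecessors.
-/

open scoped Nat

section Ranking

variable {α : Type*} [Fintype α] {b : ℕ}

theorem card_filter_lt_apply (e : α ≃ Fin b) (x : α) : #{y | e y < e x} = (e x : ℕ) := by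
  rw [← Fin.card_Iio, ← Finset.card_map e.toEmbedding]
  congr 1
  ext j
  simp

theorem Equiv.eq_of_lt_iff_lt {e e' : α ≃ Fin b} (h : ∀ y z, e y < e z ↔ e' y < e' z) :
    e = e' := by
  ext x
  rw [← card_filter_lt_apply, ← card_filter_lt_apply]
  simp only [h]

noncomputable def rankEquiv {γ : Type*} [LinearOrder γ] (f : α → γ)
    (hf : Function.Injective f) (hb : Fintype.card α = b) : α ≃ Fin b :=
  let := LinearOrder.lift' f hf
  (Fintype.orderIsoFinOfCardEq α hb).symm.toEquiv

theorem rankEquiv_lt_iff {γ : Type*} [LinearOrder γ] {f : α → γ} (hf : Function.Injective f)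
    (hb : Fintype.card α = b) {y z : α} :
    rankEquiv f hf hb y < rankEquiv f hf hb z ↔ f y < f z :=
  let := LinearOrder.lift' f hf
  (Fintype.orderIsoFinOfCardEq α hb).symm.lt_iff_lt

end Ranking

/-- Any two colour-preserving bijections differ by a colour-preserving permutation. -/
theorem card_equiv_comp_eq {α β ι : Type*} [Fintype α] [Fintype β] [DecidableEq α]
    [DecidableEq β] [Fintype ι] [DecidableEq ι] (u : α → ι) (w : β → ι)
    (h : ∀ c, Fintype.card {a // u a = c} = Fintype.card {b // w b = c}) :
    Fintype.card {e : α ≃ β // w ∘ e = u} = ∏ c, (Fintype.card {a // u a = c})! := by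
  let e₀ : α ≃ β := (Equiv.sigmaFiberEquiv u).symm.trans
    ((Equiv.sigmaCongrRight fun c => Fintype.equivOfCardEq (h c)).trans (Equiv.sigmaFiberEquiv w))
  have he₀ : w ∘ e₀ = u := funext fun a => (Fintype.equivOfCardEq (h (u a)) ⟨a, rfl⟩).2
  have hcomp : ∀ e : α ≃ β, u ∘ (e.trans e₀.symm) = w ∘ e := fun e => by
    rw [← he₀]
    funext a
    simp
  rw [← DomMulAct.stabilizer_card u]
  exact Fintype.card_congr <| (Equiv.equivCongr (Equiv.refl α) e₀.symm).subtypeEquiv fun e => by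
    show _ ↔ u ∘ (e.trans e₀.symm) = u
    rw [hcomp]

section PredecessorSets

variable {α : Type*} [Fintype α] [DecidableEq α] {b : ℕ}

/-- `lt`, `eq`, `gt` on `T`, on `x` and on the rest: an ordering in which the predecessors of `x`
are `T` is a bijection matching this colouring with `compare · ⟨|T|, _⟩` on positions. -/
def splitColour (x : α) (T : Finset α) (y : α) : Ordering :=
  if y ∈ T then .lt else if y = x then .eq else .gt

theorem card_splitColour_eq {x : α} {T : Finset α} (hx : x ∉ T) (c : Ordering) :
    Fintype.card {y // splitColour x T y = c}
      = Ordering.rec T.card 1 (Fintype.card α - T.card - 1) c := by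
  rw [Fintype.card_subtype]
  cases c
  · congr 1
    ext y
    by_cases y ∈ T <;> simp [splitColour, *]
  · rw [show univ.filter (splitColour x T · = .eq) = {x} by
      ext y; by_cases y ∈ T <;> by_cases y = x <;> simp [splitColour, *]]
    rfl
  · rw [show univ.filter (splitColour x T · = .gt) = (insert x T)ᶜ by
      ext y; by_cases y ∈ T <;> by_cases y = x <;> simp [splitColour, *]]
    simp [card_compl, hx, Nat.sub_sub]

theorem card_compare_eq (k : Fin b) (c : Ordering) :
    Fintype.card {j : Fin b // compare j k = c} = Ordering.rec (k : ℕ) 1 (b - k - 1) c := by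
  rw [Fintype.card_subtype]
  cases c
  · simp [compare_lt_iff_lt, filter_gt_eq_Iio]
  · simp [filter_eq']
  · simp [compare_gt_iff_gt, filter_lt_eq_Ioi, Nat.sub_right_comm]

theorem filter_lt_eq_iff_comp_eq {x : α} {T : Finset α} (hx : x ∉ T) (hk : T.card < b)
    (e : α ≃ Fin b) :
    univ.filter (fun y => e y < e x) = T ↔
      (compare · ⟨T.card, hk⟩) ∘ e = splitColour x T := by
  constructor
  · intro he
    have hex : e x = ⟨T.card, hk⟩ := Fin.ext (by rw [← card_filter_lt_apply, he])
    have hmem : ∀ y, y ∈ T ↔ e y < e x := fun y => by simp [← he]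
    funext y
    simp only [Function.comp_apply, splitColour, ← hex]
    rcases lt_trichotomy (e y) (e x) with h | h | h
    · simp [compare_lt_iff_lt.2 h, (hmem y).2 h]
    · obtain rfl := e.injective h
      simp [hx]
    · have hy : y ∉ T := fun hy => lt_asymm h ((hmem y).1 hy)
      have hyx : y ≠ x := fun hyx => h.ne' (congrArg e hyx)
      simp [compare_gt_iff_gt.2 h, hy, hyx]
  · intro he
    have hex : e x = ⟨T.card, hk⟩ :=
      compare_eq_iff_eq.1 ((congrFun he x).trans (by simp [splitColour, hx]))
    ext y
    rw [mem_filter, hex, ← compare_lt_iff_lt, ← Function.comp_apply (f := (compare · _)), he]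
    by_cases y ∈ T <;> simp [splitColour, *]

theorem card_equiv_fin_filter_lt_eq {x : α} {T : Finset α} (hx : x ∉ T)
    (hb : Fintype.card α = b) :
    #{e : α ≃ Fin b | univ.filter (fun y => e y < e x) = T} = T.card ! * (b - T.card - 1)! := by
  subst hb
  have hk : T.card < Fintype.card α := by
    rw [← Finset.card_univ, ← Nat.add_one_le_iff, ← card_insert_of_notMem hx]
    exact card_le_univ _
  rw [← Fintype.card_subtype,
    Fintype.card_congr (Equiv.subtypeEquivRight (filter_lt_eq_iff_comp_eq hx hk)),
    card_equiv_comp_eq _ _ fun c => by rw [card_splitColour_eq hx, card_compare_eq],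
    show (univ : Finset Ordering) = {.lt, .eq, .gt} by decide]
  simp [card_splitColour_eq hx]

end PredecessorSets

section PredsIn

variable {α : Type*}

def predsIn {s : Finset α} {n : ℕ} (e : s ≃ Fin n) (x : s) : Finset α :=
  (univ.filter (fun y => e y < e x)).map (Function.Embedding.subtype _)

theorem mem_predsIn {s : Finset α} {n : ℕ} {e : s ≃ Fin n} {x : s} {y : α} :
    y ∈ predsIn e x ↔ ∃ hy : y ∈ s, e ⟨y, hy⟩ < e x := by
  simp [predsIn]

theorem sum_predsIn [DecidableEq α] {M : Type*} [AddCommMonoid M] {s : Finset α} {x : α}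
    (hx : x ∈ s) (F : Finset α → M) :
    ∑ e : s ≃ Fin s.card, F (predsIn e ⟨x, hx⟩)
      = ∑ T ∈ (s.erase x).powerset, (T.card ! * (s.card - T.card - 1)!) • F T := by
  have hmaps : ∀ e ∈ (univ : Finset (s ≃ Fin s.card)),
      predsIn e ⟨x, hx⟩ ∈ (s.erase x).powerset := fun e _ => mem_powerset.2 fun y hy => by
    obtain ⟨hys, hlt⟩ := mem_predsIn.1 hy
    exact mem_erase.2 ⟨fun h => by subst h; exact lt_irrefl _ hlt, hys⟩
  rw [← sum_fiberwise_of_maps_to' hmaps]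
  refine sum_congr rfl fun T hT => ?_
  have hTs : T ⊆ s := (mem_powerset.1 hT).trans (erase_subset x s)
  have hfiber : ∀ e : s ≃ Fin s.card,
      predsIn e ⟨x, hx⟩ = T ↔
        univ.filter (fun y => e y < e ⟨x, hx⟩) = T.subtype (· ∈ s) := by
    intro e
    rw [predsIn, ← map_inj (f := Function.Embedding.subtype (· ∈ s)),
      subtype_map_of_mem fun y hy => hTs hy]
  have hxT : (⟨x, hx⟩ : s) ∉ T.subtype (· ∈ s) := by
    simpa [mem_subtype] using notMem_erase x s ∘ (mem_powerset.1 hT ·)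
  rw [sum_const, filter_congr fun e _ => hfiber e,
    card_equiv_fin_filter_lt_eq hxT (Fintype.card_coe s), card_subtype, filter_true_of_mem hTs]

end PredsIn

section CompatibleIntervals

variable {N : Type} [Fintype N] [DecidableEq N] {P : Finpartition (univ : Finset N)}
  {σ : N ≃ Fin (Fintype.card N)}

theorem Compatible.lt_iff_lt_of_mem (hσ : Compatible P σ) {C : Finset N} (hC : C ∈ P.parts)
    {y y' z : N} (hy : y ∈ C) (hy' : y' ∈ C) (hz : z ∉ C) : σ y < σ z ↔ σ y' < σ z := by
  have key : ∀ {y y'}, y ∈ C → y' ∈ C → σ y < σ z → σ y' < σ z := by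
    intro y y' hy hy' h
    by_contra h'
    rcases (not_lt.1 h').lt_or_eq with h'' | h''
    · obtain ⟨D, hD, hyD, -, hzD⟩ := hσ y y' z ⟨C, hC, hy, hy'⟩ h h''
      exact hz (P.eq_of_mem_parts hD hC hyD hy ▸ hzD)
    · exact hz (σ.injective h'' ▸ hy')
  exact ⟨key hy hy', key hy' hy⟩

theorem Compatible.lt_iff_lt_of_mem_of_mem (hσ : Compatible P σ) {C D : Finset N}
    (hC : C ∈ P.parts) (hD : D ∈ P.parts) (hCD : C ≠ D) {y y' z z' : N} (hy : y ∈ C)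
    (hy' : y' ∈ C) (hz : z ∈ D) (hz' : z' ∈ D) : σ y < σ z ↔ σ y' < σ z' := by
  have hzC : z ∉ C := fun h => hCD (P.eq_of_mem_parts hC hD h hz)
  have hy'D : y' ∉ D := fun h => hCD (P.eq_of_mem_parts hC hD hy' h)
  have hne : ∀ {w}, w ∈ D → σ w ≠ σ y' := fun hw h => hy'D (σ.injective h ▸ hw)
  rw [hσ.lt_iff_lt_of_mem hC hy hy' hzC, ← not_le, ← not_le, (hne hz).le_iff_lt,
    (hne hz').le_iff_lt, hσ.lt_iff_lt_of_mem hD hz hz' hy'D]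

end CompatibleIntervals

section BlockwiseOrders

variable {N : Type} [Fintype N] [DecidableEq N] {P : Finpartition (univ : Finset N)}

variable (P) in
def blockOf (j : N) : P.parts := ⟨P.part j, P.part_mem.2 (mem_univ j)⟩

variable (P) in
theorem mem_blockOf (j : N) : j ∈ (blockOf P j : Finset N) := P.mem_part (mem_univ j)

theorem blockOf_eq_of_mem {C : P.parts} {j : N} (h : j ∈ (C : Finset N)) : blockOf P j = C :=
  Subtype.ext (P.part_eq_of_mem C.2 h)

variable (P) in
abbrev InnerOrders := ∀ C : P.parts, (C : Finset N) ≃ Fin (C : Finset N).card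

variable (π : P.parts ≃ Fin P.parts.card) (ρ : InnerOrders P)

def orderKey (j : N) : Fin P.parts.card ×ₗ ℕ :=
  toLex (π (blockOf P j), (ρ (blockOf P j) ⟨j, mem_blockOf P j⟩ : ℕ))

variable {π ρ}

theorem orderKey_of_mem {C : P.parts} {j : N} (h : j ∈ (C : Finset N)) :
    orderKey π ρ j = toLex (π C, (ρ C ⟨j, h⟩ : ℕ)) := by
  obtain rfl := blockOf_eq_of_mem h
  rfl

theorem orderKey_lt_iff_of_mem {C : P.parts} {j k : N} (hj : j ∈ (C : Finset N))
    (hk : k ∈ (C : Finset N)) :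
    orderKey π ρ j < orderKey π ρ k ↔ ρ C ⟨j, hj⟩ < ρ C ⟨k, hk⟩ := by
  simp [orderKey_of_mem hj, orderKey_of_mem hk, Prod.Lex.toLex_lt_toLex]

theorem orderKey_lt_iff_of_ne {j k : N} (h : blockOf P j ≠ blockOf P k) :
    orderKey π ρ j < orderKey π ρ k ↔ π (blockOf P j) < π (blockOf P k) := by
  simp [orderKey, Prod.Lex.toLex_lt_toLex, π.injective.ne h]

variable (π ρ) in
theorem orderKey_injective : Function.Injective (orderKey π ρ) := by
  intro j k h
  have hC : blockOf P j = blockOf P k := π.injective (congrArg (fun t => (ofLex t).1) h)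
  have hk : k ∈ (blockOf P j : Finset N) := hC ▸ mem_blockOf P k
  rw [orderKey_of_mem (mem_blockOf P j), orderKey_of_mem hk] at h
  simpa using (ρ _).injective (Fin.ext (congrArg (fun t => (ofLex t).2) h))

variable (π ρ) in
/-- The ordering listing the blocks in the order `π`, each block `C` in the order `ρ C`. -/
noncomputable def blockwise : N ≃ Fin (Fintype.card N) :=
  rankEquiv (orderKey π ρ) (orderKey_injective π ρ) rfl

theorem blockwise_lt_iff {j k : N} :
    blockwise π ρ j < blockwise π ρ k ↔ orderKey π ρ j < orderKey π ρ k :=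
  rankEquiv_lt_iff _ _

theorem compatible_blockwise : Compatible P (blockwise π ρ) := by
  rintro i j k ⟨C, hC, hi, hj⟩ hik hkj
  rw [blockwise_lt_iff, orderKey_of_mem (C := ⟨C, hC⟩) hi, orderKey] at hik
  rw [blockwise_lt_iff, orderKey_of_mem (C := ⟨C, hC⟩) hj, orderKey] at hkj
  have hblock : blockOf P k = ⟨C, hC⟩ := π.injective <| le_antisymm
    (Prod.Lex.monotone_fst _ _ hkj.le) (Prod.Lex.monotone_fst _ _ hik.le)
  exact ⟨C, hC, hi, hj, by simpa [hblock] using mem_blockOf P k⟩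

variable {σ : N ≃ Fin (Fintype.card N)}
theorem blockwise_injective {π' : P.parts ≃ Fin P.parts.card} {ρ' : InnerOrders P}
    (h : blockwise π ρ = blockwise π' ρ') : π = π' ∧ ρ = ρ' := by
  have hkey : ∀ j k,
      orderKey π ρ j < orderKey π ρ k ↔ orderKey π' ρ' j < orderKey π' ρ' k := by
    intro j k
    rw [← blockwise_lt_iff, ← blockwise_lt_iff, h]
  choose r hr using fun C : P.parts => P.nonempty_of_mem_parts C.2
  refine ⟨Equiv.eq_of_lt_iff_lt fun C D => ?_,
    funext fun C => Equiv.eq_of_lt_iff_lt fun y z => ?_⟩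
  · by_cases hCD : C = D
    · simp [hCD]
    · have hne : blockOf P (r C) ≠ blockOf P (r D) := by
        rwa [blockOf_eq_of_mem (hr C), blockOf_eq_of_mem (hr D)]
      have := hkey (r C) (r D)
      rwa [orderKey_lt_iff_of_ne hne, orderKey_lt_iff_of_ne hne, blockOf_eq_of_mem (hr C),
        blockOf_eq_of_mem (hr D)] at this
  · simpa [orderKey_lt_iff_of_mem y.2 z.2] using hkey y z

theorem Compatible.exists_blockwise_eq (hσ : Compatible P σ) :
    ∃ π : P.parts ≃ Fin P.parts.card, ∃ ρ : InnerOrders P, blockwise π ρ = σ := by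
  choose r hr using fun C : P.parts => P.nonempty_of_mem_parts C.2
  have hr_inj : Function.Injective (fun C => σ (r C)) := fun C D h =>
    Subtype.ext (P.eq_of_mem_parts C.2 D.2 (hr C) (σ.injective h ▸ hr D))
  refine ⟨rankEquiv _ hr_inj (Fintype.card_coe P.parts), fun C => rankEquiv (σ ∘ Subtype.val)
    (σ.injective.comp Subtype.val_injective) (Fintype.card_coe _),
    Equiv.eq_of_lt_iff_lt fun j k => ?_⟩
  rw [blockwise_lt_iff]
  by_cases h : blockOf P j = blockOf P k
  · have hk : k ∈ (blockOf P j : Finset N) := h ▸ mem_blockOf P k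
    rw [orderKey_lt_iff_of_mem (mem_blockOf P j) hk]
    exact rankEquiv_lt_iff _ _
  · rw [orderKey_lt_iff_of_ne h, rankEquiv_lt_iff]
    exact hσ.lt_iff_lt_of_mem_of_mem (blockOf P j).2 (blockOf P k).2 (Subtype.coe_ne_coe.2 h)
      (hr _) (mem_blockOf P j) (hr _) (mem_blockOf P k)

variable (P) in
noncomputable def compatibleEquiv :
    (P.parts ≃ Fin P.parts.card) × InnerOrders P ≃ {σ // Compatible P σ} :=
  Equiv.ofBijective (fun p => ⟨blockwise p.1 p.2, compatible_blockwise⟩)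
    ⟨fun _ _ h => Prod.ext_iff.2 (blockwise_injective (congrArg Subtype.val h)), fun σ => by
      obtain ⟨π, ρ, h⟩ := σ.2.exists_blockwise_eq
      exact ⟨(π, ρ), Subtype.ext h⟩⟩

theorem preds_blockwise {B : P.parts} {i : N} (hi : i ∈ (B : Finset N)) :
    preds (blockwise π ρ) i = (predsIn π B).biUnion id ∪ predsIn (ρ B) ⟨i, hi⟩ := by
  ext j
  have hblocks : j ∈ (predsIn π B).biUnion id ↔ π (blockOf P j) < π B := by
    simp only [mem_biUnion, mem_predsIn, id]
    exact ⟨fun ⟨C, ⟨hC, hlt⟩, hjC⟩ => blockOf_eq_of_mem (C := ⟨C, hC⟩) hjC ▸ hlt,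
      fun h => ⟨_, ⟨_, h⟩, mem_blockOf P j⟩⟩
  simp only [preds, mem_filter, mem_univ, true_and, blockwise_lt_iff, mem_union, hblocks,
    mem_predsIn]
  by_cases hj : j ∈ (B : Finset N)
  · simp [orderKey_lt_iff_of_mem hj hi, blockOf_eq_of_mem hj, hj]
  · have hne : blockOf P j ≠ blockOf P i := by
      rw [blockOf_eq_of_mem hi]
      exact fun h => hj (h ▸ mem_blockOf P j)
    simp [orderKey_lt_iff_of_ne hne, blockOf_eq_of_mem hi, hj]

end BlockwiseOrders

theorem Fintype.sum_comp_eval {ι M : Type*} [Fintype ι] [DecidableEq ι] [AddCommMonoid M]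
    {X : ι → Type*} [∀ i, Fintype (X i)] (i : ι) (g : X i → M) :
    ∑ ρ : (∀ j, X j), g (ρ i)
      = Fintype.card (∀ j : {j // j ≠ i}, X j) • ∑ x, g x := by
  rw [← (Equiv.piSplitAt i X).symm.sum_comp, Fintype.sum_prod_type, smul_sum]
  simp [Equiv.piSplitAt]

theorem Fintype.card_pi_eq_mul {ι : Type*} [Fintype ι] [DecidableEq ι] {X : ι → Type*}
    [∀ i, Fintype (X i)] (i : ι) :
    Fintype.card (∀ j, X j)
      = Fintype.card (X i) * Fintype.card (∀ j : {j // j ≠ i}, X j) := by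
  rw [Fintype.card_congr (Equiv.piSplitAt i X), Fintype.card_prod]

section Averaging

variable {N : Type} [Fintype N] [DecidableEq N] (P : Finpartition (univ : Finset N))

theorem sum_compatPerms {M : Type*} [AddCommMonoid M] (F : (N ≃ Fin (Fintype.card N)) → M) :
    ∑ σ ∈ compatPerms P, F σ
      = ∑ p : (P.parts ≃ Fin P.parts.card) × InnerOrders P, F (blockwise p.1 p.2) := by
  rw [sum_subtype (p := Compatible P) _ (fun σ => by simp [compatPerms]),
    ← (compatibleEquiv P).sum_comp]
  rfl

theorem card_compatPerms_eq_mul {B : Finset N} (hB : B ∈ P.parts) :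
    (compatPerms P).card = P.parts.card ! * (B.card ! *
      Fintype.card (∀ C : {C // C ≠ (⟨B, hB⟩ : P.parts)},
        (C.1 : Finset N) ≃ Fin C.1.1.card)) := by
  have hcard : (compatPerms P).card
      = Fintype.card ((P.parts ≃ Fin P.parts.card) × InnerOrders P) := by
    rw [Fintype.card_congr (compatibleEquiv P), Fintype.card_subtype]
    rfl
  rw [hcard, Fintype.card_prod,
    Fintype.card_pi_eq_mul ⟨B, hB⟩, Fintype.card_equiv (Finset.equivFin _),
    Fintype.card_equiv (Finset.equivFin _)]
  simp

theorem sum_compatPerms_preds {M : Type*} [AddCommMonoid M] (f : Finset N → M) {B : Finset N}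
    (hB : B ∈ P.parts) {i : N} (hi : i ∈ B) :
    ∑ σ ∈ compatPerms P, f (preds σ i)
      = Fintype.card (∀ C : {C // C ≠ (⟨B, hB⟩ : P.parts)},
          (C.1 : Finset N) ≃ Fin C.1.1.card) •
        ∑ R ∈ (P.parts.erase B).powerset, (R.card ! * (P.parts.card - R.card - 1)!) •
          ∑ S ∈ (B.erase i).powerset,
            (S.card ! * (B.card - S.card - 1)!) • f (R.biUnion id ∪ S) := by
  set B' : P.parts := ⟨B, hB⟩
  have hinner : ∀ π : P.parts ≃ Fin P.parts.card,
      ∑ ρ : InnerOrders P, f ((predsIn π B').biUnion id ∪ predsIn (ρ B') ⟨i, hi⟩)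
        = Fintype.card (∀ C : {C // C ≠ B'}, (C.1 : Finset N) ≃ Fin C.1.1.card) •
          ∑ S ∈ (B.erase i).powerset,
            (S.card ! * (B.card - S.card - 1)!) • f ((predsIn π B').biUnion id ∪ S) := by
    intro π
    rw [Fintype.sum_comp_eval (X := fun C : P.parts => (C : Finset N) ≃ Fin (C : Finset N).card)
      B' fun ρB => f ((predsIn π B').biUnion id ∪ predsIn ρB ⟨i, hi⟩),
      sum_predsIn hi fun S => f ((predsIn π B').biUnion id ∪ S)]
  rw [sum_compatPerms, Fintype.sum_prod_type]
  simp_rw [preds_blockwise (B := B') hi]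
  rw [sum_congr rfl fun π _ => hinner π, ← smul_sum, sum_predsIn hB fun R =>
    ∑ S ∈ (B.erase i).powerset, (S.card ! * (B.card - S.card - 1)!) • f (R.biUnion id ∪ S)]

theorem average_compatPerms_preds (f : Finset N → ℝ) {B : Finset N} (hB : B ∈ P.parts) {i : N}
    (hi : i ∈ B) :
    1 / ((compatPerms P).card : ℝ) * ∑ σ ∈ compatPerms P, f (preds σ i)
      = ∑ R ∈ (P.parts.erase B).powerset, ∑ S ∈ (B.erase i).powerset,
          ((S.card ! * (B.card - S.card - 1)! * R.card ! * (P.parts.card - R.card - 1)! : ℝ) /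
            ((B.card ! : ℝ) * (P.parts.card ! : ℝ))) * f (R.biUnion id ∪ S) := by
  rw [card_compatPerms_eq_mul P hB, sum_compatPerms_preds P f hB hi]
  set K := Fintype.card (∀ C : {C // C ≠ (⟨B, hB⟩ : P.parts)},
    (C.1 : Finset N) ≃ Fin C.1.1.card)
  have hK : (K : ℝ) ≠ 0 :=
    Nat.cast_ne_zero.2 (Fintype.card_pos_iff.2 ⟨fun _ => Finset.equivFin _⟩).ne'
  rw [nsmul_eq_mul, ← mul_assoc, mul_sum]
  refine sum_congr rfl fun R _ => ?_
  rw [nsmul_eq_mul, ← mul_assoc, mul_sum]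
  refine sum_congr rfl fun S _ => ?_
  rw [nsmul_eq_mul, ← mul_assoc]
  congr 1
  push_cast
  field_simp

end Averaging

theorem min_max_zero_eq_sub {a : ℝ} (ha : 0 ≤ a) (x : ℝ) :
    min a (max 0 x) = max 0 x - max 0 (x - a) := by
  grind

section Reversal

variable {N : Type} [Fintype N] [DecidableEq N] {σ : N ≃ Fin (Fintype.card N)}

theorem Compatible.trans_revPerm {P : Finpartition (univ : Finset N)} (hσ : Compatible P σ) :
    Compatible P (σ.trans Fin.revPerm) := by
  intro i j k hij hik hkj
  simp only [Equiv.trans_apply, Fin.revPerm_apply, Fin.rev_lt_rev] at hik hkj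
  obtain ⟨B, hB, hj, hi, hk⟩ := hσ j i k (by simpa only [and_comm] using hij) hkj hik
  exact ⟨B, hB, hi, hj, hk⟩

theorem sum_compatPerms_trans_revPerm {M : Type*} [AddCommMonoid M]
    (P : Finpartition (univ : Finset N)) (g : (N ≃ Fin (Fintype.card N)) → M) :
    ∑ σ ∈ compatPerms P, g (σ.trans Fin.revPerm) = ∑ σ ∈ compatPerms P, g σ := by
  have hrev : Function.Involutive fun σ : N ≃ Fin (Fintype.card N) => σ.trans Fin.revPerm :=
    fun σ => Equiv.ext fun j => by simp
  refine sum_equiv hrev.toPerm (fun σ => ?_) fun _ _ => rfl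
  simp only [compatPerms, mem_filter, mem_univ, true_and, Function.Involutive.coe_toPerm]
  exact ⟨Compatible.trans_revPerm, fun h => hrev σ ▸ h.trans_revPerm⟩

theorem compl_insert_preds (i : N) :
    (insert i (preds σ i))ᶜ = preds (σ.trans Fin.revPerm) i := by
  ext j
  simp only [preds, mem_compl, mem_insert, mem_filter, mem_univ, true_and, Equiv.trans_apply,
    Fin.revPerm_apply, Fin.rev_lt_rev, not_or, not_lt]
  exact ⟨fun ⟨hji, hle⟩ => hle.lt_of_ne fun h => hji (σ.injective h).symm,
    fun h => ⟨fun hji => h.ne (congrArg σ hji.symm), h.le⟩⟩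

end Reversal

theorem bankruptcy_marginal_eq_min {N : Type} [Fintype N] [DecidableEq N] (c : N → ℝ) (E : ℝ)
    {S : Finset N} {i : N} (hi : i ∉ S) (hci : 0 ≤ c i) :
    max 0 (E - ∑ j ∈ (insert i S)ᶜ, c j) - max 0 (E - ∑ j ∈ Sᶜ, c j)
      = min (c i) (max 0 (E - ∑ j ∈ (insert i S)ᶜ, c j)) := by
  have hcompl : Sᶜ = insert i (insert i S)ᶜ := by
    rw [← compl_erase, erase_insert hi]
  rw [hcompl, sum_insert (by simp), min_max_zero_eq_sub hci, sub_add_eq_sub_sub_swap]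

theorem owen_bankruptcy_eq_RAU_general {N : Type} [Fintype N] [DecidableEq N]
    (c : N → ℝ) (E : ℝ) (hc : ∀ i, 0 ≤ c i)
    (v : Finset N → ℝ) (hv : ∀ S : Finset N, v S = max 0 (E - ∑ j ∈ Sᶜ, c j))
    (P : Finpartition (Finset.univ : Finset N))
    (i : N) (B : Finset N) (hB : B ∈ P.parts) (hiB : i ∈ B) :
    ∑ R ∈ (P.parts.erase B).powerset, ∑ S ∈ (B.erase i).powerset,
        ((Nat.factorial S.card * Nat.factorial (B.card - S.card - 1) *
          Nat.factorial R.card * Nat.factorial (P.parts.card - R.card - 1) : ℝ) /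
          ((Nat.factorial B.card : ℝ) * (Nat.factorial P.parts.card : ℝ))) *
        (v (insert i (R.biUnion id ∪ S)) - v (R.biUnion id ∪ S))
      = (1 / ((compatPerms P).card : ℝ)) *
          ∑ σ ∈ compatPerms P,
            min (c i) (max 0 (E - ∑ j ∈ preds σ i, c j)) := by
  have hmarginal : ∀ σ : N ≃ Fin (Fintype.card N), v (insert i (preds σ i)) - v (preds σ i)
      = min (c i) (max 0 (E - ∑ j ∈ preds (σ.trans Fin.revPerm) i, c j)) := fun σ => by
    rw [hv, hv, bankruptcy_marginal_eq_min c E (by simp [preds]) (hc i), compl_insert_preds]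
  rw [← average_compatPerms_preds P (fun X => v (insert i X) - v X) hB hiB,
    sum_congr rfl fun σ _ => hmarginal σ,
    sum_compatPerms_trans_revPerm P fun σ => min (c i) (max 0 (E - ∑ j ∈ preds σ i, c j))]

/-- For a bankruptcy problem with a priori unions `(N, c, E, P)` and
the associated bankruptcy game `v S = max 0 (E - ∑_{j ∉ S} c j)`, the Owen value of the
bankruptcy game equals the RA-random arrival rule with unions: for every `i ∈ N`, with
block `B = P_(i)`,
`∑_{R ⊆ P \ {B}} ∑_{S ⊆ B \ {i}} (|S|! (p_i-|S|-1)! |R|! (m-|R|-1)!)/(p_i! m!)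
   (v (∪R ∪ S ∪ {i}) - v (∪R ∪ S))
 = (1/|Π_P(N)|) ∑_{σ ∈ Π_P(N)} min (c i) (max 0 (E - ∑_{j ∈ P_i^σ} c j))`. -/
theorem owen_bankruptcy_eq_RAU {N : Type} [Fintype N] [DecidableEq N] [Nonempty N]
    (c : N → ℝ) (E : ℝ) (hc : ∀ i, 0 ≤ c i) (hE0 : 0 ≤ E) (hE : E ≤ ∑ j, c j)
    (v : Finset N → ℝ) (hv : ∀ S : Finset N, v S = max 0 (E - ∑ j ∈ Sᶜ, c j))
    (P : Finpartition (Finset.univ : Finset N))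
    (i : N) (B : Finset N) (hB : B ∈ P.parts) (hiB : i ∈ B) :
    ∑ R ∈ (P.parts.erase B).powerset, ∑ S ∈ (B.erase i).powerset,
        ((Nat.factorial S.card * Nat.factorial (B.card - S.card - 1) *
          Nat.factorial R.card * Nat.factorial (P.parts.card - R.card - 1) : ℝ) /
          ((Nat.factorial B.card : ℝ) * (Nat.factorial P.parts.card : ℝ))) *
        (v (insert i (R.biUnion id ∪ S)) - v (R.biUnion id ∪ S))
      = (1 / ((compatPerms P).card : ℝ)) *
          ∑ σ ∈ compatPerms P,
            min (c i) (max 0 (E - ∑ j ∈ preds σ i, c j)) :=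
  owen_bankruptcy_eq_RAU_general c E hc v hv P i B hB hiB
end

section
/- Let (N,c,E,P) be a bankruptcy problem with a priori unions, i ∈ N with c_i > 0, ε > 0 and α ∈ (0,1). Let ℓ ≥ 1 and equip Π_P(N)^ℓ with the ℓ-fold product of the uniform probability measure on Π_P(N); define the estimator RA̅^P_i(σ_1,…,σ_ℓ) = (1/ℓ) Σ_{k=1}^{ℓ} x(σ_k)_i. If ℓ ≥ ln(2/α)·c_i²/(2ε²), then ℙ( |RA̅^P_i − RA^P_i| ≥ ε ) ≤ α. -/
open Finset
open scoped Classical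

/-- The estimator: the mean of the marginal payments of `i` over a sample
`ω = (σ_1, …, σ_ℓ)` of `ℓ` compatible permutations. -/
noncomputable def estimator {N : Type} [Fintype N] [DecidableEq N]
    (c : N → ℝ) (E : ℝ) (P : Finpartition (Finset.univ : Finset N)) (i : N)
    (ℓ : ℕ) (ω : Fin ℓ → {σ : N ≃ Fin (Fintype.card N) // σ ∈ compatPerms P}) : ℝ :=
  (1 / (ℓ : ℝ)) * ∑ k : Fin ℓ, payment c E (ω k).1 i

/-!
The sampled marginal payments `x(σ_k)_i` are independent, uniformly distributed over `Π_P(N)`,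
take values in `[0, c_i]` and have mean `RA^P_i`. The counting probability on `Π_P(N)^ℓ` is the
product of the uniform measures, so Hoeffding's inequality (via Hoeffding's lemma and the
sub-Gaussian tail bound) gives `ℙ(|RA̅^P_i − RA^P_i| ≥ ε) ≤ 2 exp(-2ℓε²/c_i²)`, and the
sample-size condition is exactly `2 exp(-2ℓε²/c_i²) ≤ α`.
-/

open MeasureTheory ProbabilityTheory Real
open scoped NNReal

namespace ProbabilityTheory

lemma HasSubgaussianMGF.measureReal_abs_ge_le {Ω : Type*} [MeasurableSpace Ω] {μ : Measure Ω}
    {X : Ω → ℝ} {c : ℝ≥0} (h : HasSubgaussianMGF X c μ) {ε : ℝ} (hε : 0 ≤ ε) :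
    μ.real {ω | ε ≤ |X ω|} ≤ 2 * exp (-ε ^ 2 / (2 * c)) := by
  have : IsFiniteMeasure μ := by simpa [integrable_const_iff] using h.integrable_exp_mul 0
  calc μ.real {ω | ε ≤ |X ω|} ≤ μ.real ({ω | ε ≤ X ω} ∪ {ω | ε ≤ (-X) ω}) := by
        refine measureReal_mono fun ω hω => ?_
        simpa [le_abs', le_neg, or_comm] using hω
    _ ≤ μ.real {ω | ε ≤ X ω} + μ.real {ω | ε ≤ (-X) ω} := measureReal_union_le _ _
    _ ≤ 2 * exp (-ε ^ 2 / (2 * c)) := by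
        linarith [h.measure_ge_le hε, h.neg.measure_ge_le hε]

theorem measureReal_abs_sum_sub_integral_ge_le {S ι : Type*} [MeasurableSpace S] {μ : Measure S}
    [IsProbabilityMeasure μ] [Fintype ι] {f : S → ℝ} (hf : AEMeasurable f μ) {a b : ℝ}
    (hfab : ∀ᵐ s ∂μ, f s ∈ Set.Icc a b) {ε : ℝ} (hε : 0 ≤ ε) :
    (Measure.pi fun _ : ι => μ).real {ω | ε ≤ |∑ k, (f (ω k) - μ[f])|} ≤
      2 * exp (-(2 * ε ^ 2 / (Fintype.card ι * (b - a) ^ 2))) := by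
  have hX (k : ι) : HasSubgaussianMGF (fun ω : ι → S => f (ω k) - μ[f])
      ((‖b - a‖₊ / 2) ^ 2) (Measure.pi fun _ => μ) := by
    refine HasSubgaussianMGF.of_map (Y := fun ω : ι → S => ω k) (X := fun s => f s - μ[f])
      (measurable_pi_apply k).aemeasurable ?_
    rw [(measurePreserving_eval _ k).map_eq]
    exact hasSubgaussianMGF_of_mem_Icc hf hfab
  have hsum := HasSubgaussianMGF.sum_of_iIndepFun
    (iIndepFun_pi (X := fun _ s => f s - μ[f]) fun _ => hf.sub_const _) (s := Finset.univ)
    fun k _ => hX k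
  calc _ ≤ _ := hsum.measureReal_abs_ge_le hε
    _ = _ := by
      congr 2
      simp only [Finset.sum_const, Finset.card_univ, nsmul_eq_mul, NNReal.coe_mul,
        NNReal.coe_natCast, NNReal.coe_pow, NNReal.coe_div, NNReal.coe_ofNat, coe_nnnorm,
        Real.norm_eq_abs, div_pow, sq_abs]
      rw [show (2 : ℝ) * (Fintype.card ι * ((b - a) ^ 2 / 2 ^ 2)) = Fintype.card ι * (b - a) ^ 2 / 2
        by ring, div_div_eq_mul_div, neg_mul, neg_div]
      ring

section UniformOnUniv

variable {Ω : Type*} [Fintype Ω] [MeasurableSpace Ω] [MeasurableSingletonClass Ω]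

lemma uniformOn_univ_real_setOf (p : Ω → Prop) [DecidablePred p] :
    (uniformOn (Set.univ : Set Ω)).real {ω | p ω} = #{ω | p ω} / Fintype.card Ω := by
  rw [measureReal_def, uniformOn_univ, ← coe_filter_univ, Measure.count_apply_finset,
    ENNReal.toReal_div]
  simp

lemma integral_uniformOn_univ (f : Ω → ℝ) :
    ∫ ω, f ω ∂uniformOn (Set.univ : Set Ω) = (∑ ω, f ω) / Fintype.card Ω := by
  rw [integral_fintype (.of_finite), Finset.sum_div]
  simp [measureReal_def, uniformOn_univ, div_eq_inv_mul]

end UniformOnUniv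

theorem card_filter_abs_mean_sub_ge_le {S ι : Type*} [Fintype S] [Fintype ι] [DecidableEq ι]
    [Nonempty ι] (f : S → ℝ) {a b : ℝ} (hf : ∀ s, f s ∈ Set.Icc a b) {ε : ℝ} (hε : 0 ≤ ε) :
    (#{ω : ι → S | ε ≤ |(∑ k, f (ω k)) / Fintype.card ι - (∑ s, f s) / Fintype.card S|} : ℝ) /
        Fintype.card (ι → S) ≤
      2 * exp (-(2 * Fintype.card ι * ε ^ 2 / (b - a) ^ 2)) := by
  rcases isEmpty_or_nonempty S with _ | _
  · rw [Fintype.card_eq_zero (α := ι → S), Nat.cast_zero, div_zero]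
    positivity
  let _ : MeasurableSpace S := ⊤
  have : DiscreteMeasurableSpace S := ⟨fun _ => trivial⟩
  set n : ℝ := (Fintype.card ι : ℝ)
  have hn : 0 < n := by positivity
  set m : ℝ := ∫ s, f s ∂uniformOn (Set.univ : Set S)
  have hm : (∑ s, f s) / Fintype.card S = m := (integral_uniformOn_univ f).symm
  have hevent (ω : ι → S) : ε ≤ |(∑ k, f (ω k)) / n - m| ↔ n * ε ≤ |∑ k, (f (ω k) - m)| := by
    rw [Finset.sum_sub_distrib, Finset.sum_const, Finset.card_univ, nsmul_eq_mul,
      show ∑ k, f (ω k) - n * m = n * ((∑ k, f (ω k)) / n - m) by field_simp, abs_mul,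
      abs_of_pos hn, mul_le_mul_iff_right₀ hn]
  rw [← uniformOn_univ_real_setOf, ← Set.pi_univ, uniformOn_pi]
  simp only [hm, hevent]
  calc _ ≤ 2 * exp (-(2 * (n * ε) ^ 2 / (n * (b - a) ^ 2))) :=
        measureReal_abs_sum_sub_integral_ge_le (measurable_of_countable f).aemeasurable
          (ae_of_all _ hf) (by positivity)
    _ = 2 * exp (-(2 * n * ε ^ 2 / (b - a) ^ 2)) := by
      rw [← div_div]
      congr 3
      field_simp

end ProbabilityTheory

lemma payment_mem_Icc {N : Type} [Fintype N] {c : N → ℝ} (E : ℝ)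
    (σ : N ≃ Fin (Fintype.card N)) {i : N} (hci : 0 ≤ c i) :
    payment c E σ i ∈ Set.Icc 0 (c i) :=
  ⟨le_min hci (le_max_left _ _), min_le_left _ _⟩

lemma estimator_eq_sum_div {N : Type} [Fintype N] [DecidableEq N] (c : N → ℝ) (E : ℝ)
    (P : Finpartition (Finset.univ : Finset N)) (i : N) (ℓ : ℕ)
    (ω : Fin ℓ → {σ : N ≃ Fin (Fintype.card N) // σ ∈ compatPerms P}) :
    estimator c E P i ℓ ω = (∑ k, payment c E (ω k).1 i) / ℓ :=
  one_div_mul_eq_div _ _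

lemma RAU_eq_sum_div {N : Type} [Fintype N] [DecidableEq N] (c : N → ℝ) (E : ℝ)
    (P : Finpartition (Finset.univ : Finset N)) (i : N) :
    RAU c E P i = (∑ σ : {σ // σ ∈ compatPerms P}, payment c E σ.1 i) /
      Fintype.card {σ // σ ∈ compatPerms P} := by
  rw [RAU, one_div_mul_eq_div, ← Finset.sum_coe_sort, Fintype.card_coe]

lemma two_mul_exp_neg_le {α x : ℝ} (hα : 0 < α) (hx : log (2 / α) ≤ x) : 2 * exp (-x) ≤ α := by
  have : exp (-x) ≤ α / 2 := by
    rw [← inv_div, ← exp_log (by positivity : 0 < 2 / α), ← exp_neg]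
    exact exp_le_exp.mpr (neg_le_neg hx)
  linarith

theorem hoeffding_sample_size_bound_general {N : Type} [Fintype N] [DecidableEq N]
    (c : N → ℝ) (E : ℝ) (hc : ∀ i, 0 ≤ c i)
    (P : Finpartition (Finset.univ : Finset N)) (i : N) (hci : 0 < c i)
    (ε α : ℝ) (hε : 0 < ε) (hα0 : 0 < α)
    (ℓ : ℕ) (hℓ : 1 ≤ ℓ)
    (hsize : (ℓ : ℝ) ≥ Real.log (2 / α) * c i ^ 2 / (2 * ε ^ 2)) :
    ((Finset.univ.filter
        (fun ω : Fin ℓ → {σ : N ≃ Fin (Fintype.card N) // σ ∈ compatPerms P} =>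
          ε ≤ |estimator c E P i ℓ ω - RAU c E P i|)).card : ℝ) /
      (Fintype.card (Fin ℓ → {σ : N ≃ Fin (Fintype.card N) // σ ∈ compatPerms P}) : ℝ)
      ≤ α := by
  have : Nonempty (Fin ℓ) := ⟨⟨0, hℓ⟩⟩
  have hHoeffding := card_filter_abs_mean_sub_ge_le (ι := Fin ℓ)
    (fun σ : {σ // σ ∈ compatPerms P} => payment c E σ.1 i) (fun σ => payment_mem_Icc E σ.1 (hc i))
    hε.le
  simp only [Fintype.card_fin, sub_zero] at hHoeffding
  simp only [estimator_eq_sum_div, RAU_eq_sum_div]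
  refine hHoeffding.trans (two_mul_exp_neg_le hα0 ?_)
  rw [le_div_iff₀ (by positivity)]
  rw [ge_iff_le, div_le_iff₀ (by positivity)] at hsize
  linarith

/-- (Hoeffding sample size bound.) If the sample size satisfies
`ℓ ≥ ln(2/α) · c i ² / (2 ε²)`, then under the `ℓ`-fold product of the uniform
probability measure on `Π_P(N)` (i.e. the uniform measure on the finite product space),
`ℙ(|RA̅^P_i − RA^P_i| ≥ ε) ≤ α`. -/
theorem hoeffding_sample_size_bound {N : Type} [Fintype N] [DecidableEq N] [Nonempty N]
    (c : N → ℝ) (E : ℝ) (hc : ∀ i, 0 ≤ c i) (hE0 : 0 ≤ E) (hE : E ≤ ∑ j, c j)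
    (P : Finpartition (Finset.univ : Finset N)) (i : N) (hci : 0 < c i)
    (ε α : ℝ) (hε : 0 < ε) (hα0 : 0 < α) (hα1 : α < 1)
    (ℓ : ℕ) (hℓ : 1 ≤ ℓ)
    (hsize : (ℓ : ℝ) ≥ Real.log (2 / α) * c i ^ 2 / (2 * ε ^ 2)) :
    ((Finset.univ.filter
        (fun ω : Fin ℓ → {σ : N ≃ Fin (Fintype.card N) // σ ∈ compatPerms P} =>
          ε ≤ |estimator c E P i ℓ ω - RAU c E P i|)).card : ℝ) /
      (Fintype.card (Fin ℓ → {σ : N ≃ Fin (Fintype.card N) // σ ∈ compatPerms P}) : ℝ)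
      ≤ α :=
  hoeffding_sample_size_bound_general c E hc P i hci ε α hε hα0 ℓ hℓ hsize
end
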